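/- arXiv:2210.17007 — 2 statements merged into one kernel-verified Lean document; each statement's English description precedes it below -/
import Mathlib

section
/- There is a universal constant C > 0 such that for every continuously differentiable function f : ℝ → ℝ with f ∈ L¹(ℝ) and f' ∈ L²(ℝ), one has the Gagliardo–Nirenberg interpolation inequality ‖f‖_{L³(ℝ)} ≤ C ‖f‖_{L¹(ℝ)}^{5/9} · ‖f'‖_{L²(ℝ)}^{4/9}. -/
open MeasureTheory

private lemma gn_bounded (f : ℝ → ℝ) (hf : ContDiff ℝ 1 f) (hf1 : Integrable f)
    (hf'sq : Integrable (fun x => (deriv f x)^2)) (x : ℝ) :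
    |f x| ≤ (∫ t : ℝ, |f t|) + (1 + ∫ t : ℝ, (deriv f t)^2) / 2 := by
  have hfc : Continuous f := hf.continuous
  have hf'c : Continuous (deriv f) := hf.continuous_deriv le_rfl
  have hfd : Differentiable ℝ f := hf.differentiable one_ne_zero
  obtain ⟨y, hy, hymin⟩ := isCompact_Icc.exists_isMinOn (α := ℝ) (s := Set.Icc (x-1) x)
    ⟨x, by constructor <;> linarith⟩ (hfc.abs.continuousOn)
  have hyx : y ≤ x := hy.2
  have h1 : |f y| ≤ ∫ t : ℝ, |f t| := by
    have h2 : |f y| = ∫ t in (x-1)..x, |f y| := by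
      rw [intervalIntegral.integral_const]; ring_nf
    have h3 : (∫ t in (x-1)..x, |f y|) ≤ ∫ t in (x-1)..x, |f t| := by
      apply intervalIntegral.integral_mono_on (by linarith) (intervalIntegrable_const)
        (hf1.abs.intervalIntegrable) (fun z hz => hymin hz)
    have h4 : (∫ t in (x-1)..x, |f t|) ≤ ∫ t : ℝ, |f t| := by
      rw [intervalIntegral.integral_of_le (by linarith)]
      exact setIntegral_le_integral hf1.abs (Filter.Eventually.of_forall fun t => abs_nonneg _)
    linarith
  have hftc : f x - f y = ∫ t in y..x, deriv f t := by
    rw [intervalIntegral.integral_deriv_eq_sub (fun t _ => hfd t) (hf'c.intervalIntegrable y x)]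
  have h5 : |f x - f y| ≤ (1 + ∫ t : ℝ, (deriv f t)^2) / 2 := by
    rw [hftc]
    calc |∫ t in y..x, deriv f t| ≤ ∫ t in Set.Ioc y x, |deriv f t| := by
          simpa [Set.uIoc_of_le hyx] using
            intervalIntegral.norm_integral_le_integral_norm_uIoc (f := deriv f) (a := y) (b := x)
      _ ≤ ∫ t in Set.Ioc y x, (1 + (deriv f t)^2) / 2 := by
          apply setIntegral_mono_on (hf'c.abs.integrableOn_Ioc)
            (((continuous_const.add (hf'c.pow 2)).div_const 2).integrableOn_Ioc)
            measurableSet_Ioc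
          intro t _
          show |deriv f t| ≤ (1 + deriv f t ^ 2) / 2
          nlinarith [sq_nonneg (|deriv f t| - 1), sq_abs (deriv f t)]
      _ = (∫ t in Set.Ioc y x, (1:ℝ)) / 2 + (∫ t in Set.Ioc y x, (deriv f t)^2) / 2 := by
          have e : ∀ t : ℝ, (1 + (deriv f t)^2) / 2 = 1/2 + (deriv f t)^2 / 2 := fun t => by ring
          simp_rw [e]
          have hi1 : IntegrableOn (fun _ : ℝ => (1/2:ℝ)) (Set.Ioc y x) := integrableOn_const (by simp)
          have hi2 : IntegrableOn (fun t => deriv f t ^ 2 / 2) (Set.Ioc y x) :=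
            ((hf'c.pow 2).div_const 2).integrableOn_Ioc
          rw [integral_add hi1 hi2, integral_div]
          norm_num [integral_div]
      _ ≤ (1 + ∫ t : ℝ, (deriv f t)^2) / 2 := by
          have e1 : (∫ t in Set.Ioc y x, (1:ℝ)) = x - y := by
            simp [Real.volume_Ioc, ENNReal.toReal_ofReal (by linarith : (0:ℝ) ≤ x - y)]; linarith
          have e2 : (∫ t in Set.Ioc y x, (deriv f t)^2) ≤ ∫ t : ℝ, (deriv f t)^2 :=
            setIntegral_le_integral hf'sq (Filter.Eventually.of_forall fun t => sq_nonneg _)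
          have : x - y ≤ 1 := by have := hy.1; linarith
          linarith
  calc |f x| ≤ |f y| + |f x - f y| := by
        have := abs_sub_abs_le_abs_sub (f x) (f y); linarith [abs_nonneg (f x - f y)]
    _ ≤ (∫ t : ℝ, |f t|) + (1 + ∫ t : ℝ, (deriv f t)^2) / 2 := by linarith

private lemma gn_sup_sq (f : ℝ → ℝ) (hf : ContDiff ℝ 1 f) (hf1 : Integrable f)
    (hff' : Integrable (fun t => f t * deriv f t)) (x : ℝ) :
    f x ^ 2 ≤ 2 * ∫ t : ℝ, |f t * deriv f t| := by
  have hfc : Continuous f := hf.continuous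
  have hf'c : Continuous (deriv f) := hf.continuous_deriv le_rfl
  have hfd : Differentiable ℝ f := hf.differentiable one_ne_zero
  have key : ∀ ε : ℝ, 0 < ε → f x ^ 2 ≤ 2 * (∫ t : ℝ, |f t * deriv f t|) + ε := by
    intro ε hε
    have hδ : ∃ y : ℝ, |f y| < Real.sqrt ε := by
      by_contra hcon
      push_neg at hcon
      have hδ0 : 0 < Real.sqrt ε := Real.sqrt_pos.2 hε
      have : Integrable (fun _ : ℝ => Real.sqrt ε) :=
        Integrable.mono' hf1.abs aestronglyMeasurable_const
          (Filter.Eventually.of_forall fun y => by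
            rw [Real.norm_of_nonneg hδ0.le]; exact hcon y)
      rw [integrable_const_iff] at this
      rcases this with h | h
      · exact hδ0.ne' h
      · simpa using h.measure_univ_lt_top.ne
    obtain ⟨y, hy⟩ := hδ
    have hftc : (∫ t in y..x, 2 * f t * deriv f t) = f x ^ 2 - f y ^ 2 := by
      apply intervalIntegral.integral_eq_sub_of_hasDerivAt
      · intro t _
        have := ((hfd t).hasDerivAt).fun_pow 2
        simpa using this
      · exact (((continuous_const.mul hfc).mul hf'c)).intervalIntegrable y x
    have hb : |∫ t in y..x, 2 * f t * deriv f t| ≤ 2 * ∫ t : ℝ, |f t * deriv f t| := by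
      calc |∫ t in y..x, 2 * f t * deriv f t| ≤ ∫ t in Set.uIoc y x, 2 * |f t * deriv f t| := by
            have := intervalIntegral.norm_integral_le_integral_norm_uIoc
              (f := fun t => 2 * f t * deriv f t) (a := y) (b := x) (μ := volume)
            simpa [abs_mul, mul_assoc] using this
        _ ≤ ∫ t : ℝ, 2 * |f t * deriv f t| :=
            setIntegral_le_integral (hff'.abs.const_mul 2)
              (Filter.Eventually.of_forall fun t => by positivity)
        _ = 2 * ∫ t : ℝ, |f t * deriv f t| := integral_const_mul 2 _
    have hy2 : f y ^ 2 ≤ ε := by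
      rw [← sq_abs]
      calc |f y| ^ 2 ≤ Real.sqrt ε ^ 2 := by
            apply pow_le_pow_left₀ (abs_nonneg _) hy.le
        _ = ε := Real.sq_sqrt hε.le
    nlinarith [le_abs_self (∫ t in y..x, 2 * f t * deriv f t),
      neg_abs_le (∫ t in y..x, 2 * f t * deriv f t)]
  by_contra hcon
  push_neg at hcon
  have := key ((f x ^ 2 - 2 * ∫ t : ℝ, |f t * deriv f t|)/2) (by linarith)
  linarith

private lemma gn_cs (f : ℝ → ℝ) (hfm : MemLp f 2) (hf2 : MemLp (deriv f) 2) :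
    (∫ t : ℝ, |f t * deriv f t|) ≤
      Real.sqrt (∫ t : ℝ, (f t)^2) * Real.sqrt (∫ t : ℝ, (deriv f t)^2) := by
  have h2 : (ENNReal.ofReal (2:ℝ)) = 2 := by norm_num
  have := integral_mul_le_Lp_mul_Lq_of_nonneg (μ := volume)
    ((Real.holderConjugate_iff (q := 2)).mpr ⟨one_lt_two, by norm_num⟩)
    (f := fun t => |f t|) (g := fun t => |deriv f t|)
    (Filter.Eventually.of_forall fun t => abs_nonneg _)
    (Filter.Eventually.of_forall fun t => abs_nonneg _)
    (by rw [h2]; exact hfm.abs) (by rw [h2]; exact hf2.abs)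
  calc (∫ t : ℝ, |f t * deriv f t|) = ∫ t : ℝ, |f t| * |deriv f t| := by
        simp_rw [abs_mul]
    _ ≤ (∫ t : ℝ, |f t| ^ (2:ℝ)) ^ ((1:ℝ)/2) * (∫ t : ℝ, |deriv f t| ^ (2:ℝ)) ^ ((1:ℝ)/2) := this
    _ = Real.sqrt (∫ t : ℝ, (f t)^2) * Real.sqrt (∫ t : ℝ, (deriv f t)^2) := by
        simp_rw [Real.rpow_two, sq_abs, Real.sqrt_eq_rpow]

private lemma gn_algebra (P A B2 S : ℝ) (hP0 : 0 ≤ P) (hA0 : 0 ≤ A)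
    (hB20 : 0 ≤ B2) (hS0 : 0 ≤ S)
    (h1 : S ≤ Real.sqrt (2 * Real.sqrt S * Real.sqrt B2) * A)
    (h3 : P ≤ 2 * Real.sqrt S * Real.sqrt B2 * A) :
    P ^ ((1:ℝ)/3) ≤ 2 * A ^ ((5:ℝ)/9) * B2 ^ ((2:ℝ)/9) := by
  set s := Real.sqrt S with hs
  set b := Real.sqrt B2 with hb
  have hs0 : 0 ≤ s := Real.sqrt_nonneg _
  have hb0 : 0 ≤ b := Real.sqrt_nonneg _
  have hss : s^2 = S := Real.sq_sqrt hS0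
  have hbb : b^2 = B2 := Real.sq_sqrt hB20
  have hK0 : 0 ≤ 2 * s * b := by positivity
  have h2 : s^4 ≤ 2*s*b*A^2 := by
    have := mul_le_mul h1 h1 hS0 (by positivity : (0:ℝ) ≤ Real.sqrt (2*s*b) * A)
    have e : Real.sqrt (2*s*b) * A * (Real.sqrt (2*s*b) * A) = (2*s*b) * A^2 := by
      rw [show Real.sqrt (2*s*b) * A * (Real.sqrt (2*s*b) * A)
          = (Real.sqrt (2*s*b) * Real.sqrt (2*s*b)) * A^2 by ring,
        Real.mul_self_sqrt hK0]
    nlinarith [hss]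
  have hP3 : P^3 ≤ 512 * A^5 * B2^2 := by
    rcases eq_or_lt_of_le hs0 with h | hspos
    · have hP0' : P ≤ 0 := by rw [← h] at h3; simpa using h3
      have hPeq : P = 0 := le_antisymm hP0' hP0
      rw [hPeq]
      have : (0:ℝ)^3 = 0 := by norm_num
      rw [this]; positivity
    · have hs3 : s^3 ≤ 2*b*A^2 := by
        have := h2
        nlinarith
      have : P^3 ≤ (2*s*b*A)^3 := pow_le_pow_left₀ hP0 h3 3
      calc P^3 ≤ (2*s*b*A)^3 := this
        _ = 8 * s^3 * b^3 * A^3 := by ring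
        _ ≤ 8 * (2*b*A^2) * b^3 * A^3 := by
            nlinarith [mul_le_mul_of_nonneg_right hs3 (show (0:ℝ) ≤ 8*b^3*A^3 by positivity)]
        _ = 16 * (b^2)^2 * A^5 := by ring
        _ ≤ 512 * A^5 * B2^2 := by rw [hbb]; nlinarith [sq_nonneg B2, pow_nonneg hA0 5]
  have hR0 : (0:ℝ) ≤ 2 * A ^ ((5:ℝ)/9) * B2 ^ ((2:ℝ)/9) := by positivity
  have hL0 : (0:ℝ) ≤ P ^ ((1:ℝ)/3) := Real.rpow_nonneg hP0 _
  rw [← pow_le_pow_iff_left₀ hL0 hR0 (n := 9) (by norm_num)]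
  have eL : (P ^ ((1:ℝ)/3))^9 = P^3 := by
    rw [← Real.rpow_natCast (P ^ ((1:ℝ)/3)) 9, ← Real.rpow_mul hP0,
      show (1:ℝ)/3 * ((9:ℕ):ℝ) = ((3:ℕ):ℝ) by norm_num, Real.rpow_natCast]
  have eR : (2 * A ^ ((5:ℝ)/9) * B2 ^ ((2:ℝ)/9))^9 = 512 * A^5 * B2^2 := by
    rw [mul_pow, mul_pow,
      ← Real.rpow_natCast (A ^ ((5:ℝ)/9)) 9, ← Real.rpow_mul hA0,
      ← Real.rpow_natCast (B2 ^ ((2:ℝ)/9)) 9, ← Real.rpow_mul hB20,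
      show (5:ℝ)/9 * ((9:ℕ):ℝ) = ((5:ℕ):ℝ) by norm_num,
      show (2:ℝ)/9 * ((9:ℕ):ℝ) = ((2:ℕ):ℝ) by norm_num,
      Real.rpow_natCast, Real.rpow_natCast]
    norm_num
  rw [eL, eR]
  exact hP3

/-- Gagliardo–Nirenberg interpolation inequality:
`‖f‖_{L³(ℝ)} ≤ C ‖f‖_{L¹(ℝ)}^{5/9} ‖f'‖_{L²(ℝ)}^{4/9}` for `C¹` functions
`f` with `f ∈ L¹` and `f' ∈ L²`. -/
theorem gagliardo_nirenberg_L3 :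
    ∃ C : ℝ, 0 < C ∧
      ∀ f : ℝ → ℝ, ContDiff ℝ 1 f → Integrable f → MemLp (deriv f) 2 →
        (∫ x : ℝ, |f x| ^ 3) ^ ((1 : ℝ) / 3)
          ≤ C * (∫ x : ℝ, |f x|) ^ ((5 : ℝ) / 9)
            * (∫ x : ℝ, (deriv f x) ^ 2) ^ ((2 : ℝ) / 9) := by
  refine ⟨2, by norm_num, ?_⟩
  intro f hf hf1 hf2
  have hfc : Continuous f := hf.continuous
  have hf'c : Continuous (deriv f) := hf.continuous_deriv le_rfl
  have hf'sq : Integrable (fun x => (deriv f x)^2) := hf2.integrable_sq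
  set A := ∫ x : ℝ, |f x| with hA
  set B2 := ∫ x : ℝ, (deriv f x) ^ 2 with hB2
  have hA0 : 0 ≤ A := integral_nonneg fun x => abs_nonneg _
  have hB20 : 0 ≤ B2 := integral_nonneg fun x => sq_nonneg _
  -- boundedness
  set M := A + (1 + B2) / 2 with hM
  have hbdd : ∀ x : ℝ, |f x| ≤ M := fun x => gn_bounded f hf hf1 hf'sq x
  have hM0 : 0 ≤ M := le_trans (abs_nonneg _) (hbdd 0)
  -- f ∈ L²
  have hsq : Integrable (fun x => (f x)^2) := by
    apply Integrable.mono' (hf1.abs.const_mul M) ((hfc.pow 2).aestronglyMeasurable)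
    refine Filter.Eventually.of_forall fun x => ?_
    rw [Pi.pow_apply, Real.norm_of_nonneg (sq_nonneg _), sq, ← abs_mul_abs_self (f x)]
    exact mul_le_mul_of_nonneg_right (hbdd x) (abs_nonneg _)
  have hfm : MemLp f 2 := (memLp_two_iff_integrable_sq hfc.aestronglyMeasurable).2 hsq
  -- f·f' integrable
  have hff' : Integrable (fun t => f t * deriv f t) := by
    apply Integrable.mono' ((hsq.add hf'sq).div_const 2)
      ((hfc.mul hf'c).aestronglyMeasurable)
    refine Filter.Eventually.of_forall fun x => ?_
    rw [Real.norm_eq_abs, Pi.mul_apply, abs_mul]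
    simp only [Pi.add_apply]
    nlinarith [sq_nonneg (|f x| - |deriv f x|), sq_abs (f x), sq_abs (deriv f x),
      abs_nonneg (f x), abs_nonneg (deriv f x)]
  set S := ∫ x : ℝ, (f x)^2 with hSdef
  have hS0 : 0 ≤ S := integral_nonneg fun x => sq_nonneg _
  -- pointwise sup bound with Cauchy–Schwarz
  have hcs : (∫ t : ℝ, |f t * deriv f t|) ≤ Real.sqrt S * Real.sqrt B2 := gn_cs f hfm hf2
  set K := 2 * Real.sqrt S * Real.sqrt B2 with hK
  have hK0 : 0 ≤ K := by positivity
  have hsup : ∀ x : ℝ, f x ^ 2 ≤ K := by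
    intro x
    calc f x ^ 2 ≤ 2 * ∫ t : ℝ, |f t * deriv f t| := gn_sup_sq f hf hf1 hff' x
      _ ≤ K := by rw [hK]; nlinarith
  have habs_le : ∀ x : ℝ, |f x| ≤ Real.sqrt K := by
    intro x
    have := hsup x
    calc |f x| = Real.sqrt (f x ^ 2) := (Real.sqrt_sq_eq_abs _).symm
      _ ≤ Real.sqrt K := Real.sqrt_le_sqrt this
  -- h1 : S ≤ √K * A
  have h1 : S ≤ Real.sqrt K * A := by
    calc S = ∫ x : ℝ, (f x)^2 := rfl
      _ ≤ ∫ x : ℝ, Real.sqrt K * |f x| := by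
          apply integral_mono hsq (hf1.abs.const_mul _)
          intro x
          dsimp only
          rw [sq, ← abs_mul_abs_self (f x)]
          exact mul_le_mul_of_nonneg_right (habs_le x) (abs_nonneg _)
      _ = Real.sqrt K * A := integral_const_mul _ _
  -- P and h3 : P ≤ K * A
  set P := ∫ x : ℝ, |f x| ^ 3 with hP
  have hP0 : 0 ≤ P := integral_nonneg fun x => by positivity
  have hcube : Integrable (fun x => |f x| ^ 3) := by
    apply Integrable.mono' (hf1.abs.const_mul K) ((hfc.abs.pow 3).aestronglyMeasurable)
    refine Filter.Eventually.of_forall fun x => ?_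
    rw [Pi.pow_apply, Real.norm_of_nonneg (by positivity)]
    calc |f x| ^ 3 = f x ^ 2 * |f x| := by rw [← sq_abs]; ring
      _ ≤ K * |f x| := mul_le_mul_of_nonneg_right (hsup x) (abs_nonneg _)
  have h3 : P ≤ K * A := by
    calc P ≤ ∫ x : ℝ, K * |f x| := by
          apply integral_mono hcube (hf1.abs.const_mul _)
          intro x
          dsimp only
          calc |f x| ^ 3 = f x ^ 2 * |f x| := by rw [← sq_abs]; ring
            _ ≤ K * |f x| := mul_le_mul_of_nonneg_right (hsup x) (abs_nonneg _)
      _ = K * A := integral_const_mul _ _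
  exact gn_algebra P A B2 S hP0 hA0 hB20 hS0 h1 (by rw [hK] at h3; exact h3)
end

section
/- There exist constants δ ∈ (0,1) and C₁, C₂ > 0 such that for every quadruple ξ = (ξ₁,ξ₂,ξ₃,ξ₄) ∈ ℝ⁴ satisfying 1 + |Δ⁴ξ| ≤ δ · δξ^med, the Galilean-adjusted symbol is elliptic and comparable to δξ^hi · δξ^med: C₁ · δξ^hi · δξ^med ≤ |˜Δ⁴ξ²| ≤ C₂ · δξ^hi · δξ^med. -/
noncomputable section

/-- `Δ⁴ξ = ξ₁ - ξ₂ + ξ₃ - ξ₄`. -/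
def delta4 (ξ₁ ξ₂ ξ₃ ξ₄ : ℝ) : ℝ := ξ₁ - ξ₂ + ξ₃ - ξ₄

/-- `Δ⁴ξ² = ξ₁² - ξ₂² + ξ₃² - ξ₄²`. -/
def delta4sq (ξ₁ ξ₂ ξ₃ ξ₄ : ℝ) : ℝ := ξ₁ ^ 2 - ξ₂ ^ 2 + ξ₃ ^ 2 - ξ₄ ^ 2

/-- `ξ_avg = (ξ₁ + ξ₂ + ξ₃ + ξ₄)/4`. -/
def xiAvg (ξ₁ ξ₂ ξ₃ ξ₄ : ℝ) : ℝ := (ξ₁ + ξ₂ + ξ₃ + ξ₄) / 4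

/-- The Galilean-adjusted symbol `˜Δ⁴ξ² = Δ⁴ξ² − 2 ξ_avg Δ⁴ξ`. -/
def tildeDelta4sq (ξ₁ ξ₂ ξ₃ ξ₄ : ℝ) : ℝ :=
  delta4sq ξ₁ ξ₂ ξ₃ ξ₄ - 2 * xiAvg ξ₁ ξ₂ ξ₃ ξ₄ * delta4 ξ₁ ξ₂ ξ₃ ξ₄

/-- `δξ^hi = max{|ξ₁−ξ₂|+|ξ₃−ξ₄| , |ξ₁−ξ₄|+|ξ₃−ξ₂|}`. -/
def deltaXiHi (ξ₁ ξ₂ ξ₃ ξ₄ : ℝ) : ℝ :=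
  max (|ξ₁ - ξ₂| + |ξ₃ - ξ₄|) (|ξ₁ - ξ₄| + |ξ₃ - ξ₂|)

/-- `δξ^med = min{|ξ₁−ξ₂|+|ξ₃−ξ₄| , |ξ₁−ξ₄|+|ξ₃−ξ₂|}`. -/
def deltaXiMed (ξ₁ ξ₂ ξ₃ ξ₄ : ℝ) : ℝ :=
  min (|ξ₁ - ξ₂| + |ξ₃ - ξ₄|) (|ξ₁ - ξ₄| + |ξ₃ - ξ₂|)

/-- In the region `Ω₂ = {1 + |Δ⁴ξ| ≪ δξ^med}`, the Galilean-adjusted symbol `˜Δ⁴ξ²`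
is elliptic, of size `δξ^hi · δξ^med`. -/
theorem tildeDelta4sq_elliptic_on_Omega2 :
    ∃ δ : ℝ, 0 < δ ∧ δ < 1 ∧
      ∃ C₁ C₂ : ℝ, 0 < C₁ ∧ 0 < C₂ ∧
        ∀ ξ₁ ξ₂ ξ₃ ξ₄ : ℝ,
          1 + |delta4 ξ₁ ξ₂ ξ₃ ξ₄| ≤ δ * deltaXiMed ξ₁ ξ₂ ξ₃ ξ₄ →
          C₁ * deltaXiHi ξ₁ ξ₂ ξ₃ ξ₄ * deltaXiMed ξ₁ ξ₂ ξ₃ ξ₄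
              ≤ |tildeDelta4sq ξ₁ ξ₂ ξ₃ ξ₄|
            ∧ |tildeDelta4sq ξ₁ ξ₂ ξ₃ ξ₄|
              ≤ C₂ * deltaXiHi ξ₁ ξ₂ ξ₃ ξ₄ * deltaXiMed ξ₁ ξ₂ ξ₃ ξ₄ := by

  refine ⟨1/2, by norm_num, by norm_num, 1/8, 1, by norm_num, by norm_num, ?_⟩
  intro ξ₁ ξ₂ ξ₃ ξ₄ h
  set a := ξ₁ - ξ₂ with ha
  set b := ξ₃ - ξ₄ with hb
  set c := ξ₁ - ξ₄ with hc
  set d := ξ₃ - ξ₂ with hd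
  have hprod : deltaXiHi ξ₁ ξ₂ ξ₃ ξ₄ * deltaXiMed ξ₁ ξ₂ ξ₃ ξ₄ = (|a| + |b|) * (|c| + |d|) := by
    unfold deltaXiHi deltaXiMed
    rcases le_total (|ξ₁ - ξ₂| + |ξ₃ - ξ₄|) (|ξ₁ - ξ₄| + |ξ₃ - ξ₂|) with hle | hle
    · rw [max_eq_right hle, min_eq_left hle]; ring
    · rw [max_eq_left hle, min_eq_right hle]
  have hid : tildeDelta4sq ξ₁ ξ₂ ξ₃ ξ₄ = (a - b) * (c - d) / 2 := by
    unfold tildeDelta4sq delta4sq xiAvg delta4; rw [ha, hb, hc, hd]; ring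
  have habs : |tildeDelta4sq ξ₁ ξ₂ ξ₃ ξ₄| = |a - b| * |c - d| / 2 := by
    rw [hid, abs_div, abs_mul]; norm_num
  have hd4 : delta4 ξ₁ ξ₂ ξ₃ ξ₄ = a + b := by unfold delta4; rw [ha, hb]; ring
  have hd4' : a + b = c + d := by rw [ha, hb, hc, hd]; ring
  have habpos : 0 ≤ |a| + |b| := by positivity
  have hcdpos : 0 ≤ |c| + |d| := by positivity
  have hmin1 : deltaXiMed ξ₁ ξ₂ ξ₃ ξ₄ ≤ |a| + |b| := min_le_left _ _
  have hmin2 : deltaXiMed ξ₁ ξ₂ ξ₃ ξ₄ ≤ |c| + |d| := min_le_right _ _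
  have hab0 : |delta4 ξ₁ ξ₂ ξ₃ ξ₄| ≥ 0 := abs_nonneg _
  have hs1 : |a + b| ≤ (1/2) * (|a| + |b|) := by
    rw [← hd4]
    calc |delta4 ξ₁ ξ₂ ξ₃ ξ₄| ≤ (1/2) * deltaXiMed ξ₁ ξ₂ ξ₃ ξ₄ := by linarith
    _ ≤ (1/2) * (|a| + |b|) := by linarith
  have hs2 : |c + d| ≤ (1/2) * (|c| + |d|) := by
    rw [← hd4', ← hd4]
    calc |delta4 ξ₁ ξ₂ ξ₃ ξ₄| ≤ (1/2) * deltaXiMed ξ₁ ξ₂ ξ₃ ξ₄ := by linarith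
    _ ≤ (1/2) * (|c| + |d|) := by linarith
  -- lower bounds on |a-b|, |c-d|
  have key : ∀ x y : ℝ, |x + y| ≤ (1/2) * (|x| + |y|) → (|x| + |y|) / 2 ≤ |x - y| := by
    intro x y hxy
    have e1 : 2 * |x| ≤ |x - y| + |x + y| := by
      have := abs_add_le (x - y) (x + y)
      have h2 : x - y + (x + y) = 2 * x := by ring
      rw [h2] at this
      rw [abs_mul, abs_two] at this
      linarith
    have e2 : 2 * |y| ≤ |x - y| + |x + y| := by
      have := abs_sub (x + y) (x - y)
      have h2 : x + y - (x - y) = 2 * y := by ring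
      rw [h2] at this
      rw [abs_mul, abs_two] at this
      linarith
    linarith
  have l1 : (|a| + |b|) / 2 ≤ |a - b| := key a b hs1
  have l2 : (|c| + |d|) / 2 ≤ |c - d| := key c d hs2
  constructor
  · rw [mul_assoc, hprod, habs]
    nlinarith [mul_le_mul l1 l2 (by positivity) (abs_nonneg (a - b))]
  · rw [mul_assoc, hprod, habs]
    have u1 : |a - b| ≤ |a| + |b| := abs_sub _ _
    have u2 : |c - d| ≤ |c| + |d| := abs_sub _ _
    nlinarith [mul_le_mul u1 u2 (abs_nonneg _) habpos]
end
end
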